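/- arXiv:2412.00336 — 2 statements merged into one kernel-verified Lean document; each statement's English description precedes it below -/
import Mathlib

section
/- For all n ≥ 1, the number of nonnesting permutations of the multiset {1,1,2,2,…,n,n} that avoid the pattern 112 equals the nth Catalan number C_n = binom(2n,n)/(n+1). -/
/-- `w` is a permutation of the multiset `{1,1,2,2,…,n,n}`:
a word in which every value in `{1,…,n}` occurs exactly twice
and no other value occurs. -/
def IsMultisetPerm (n : ℕ) (w : List ℕ) : Prop :=
  ∀ i : ℕ, w.count i = if 1 ≤ i ∧ i ≤ n then 2 else 0

/-- `t` is order-isomorphic to the word `σ`: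
same length, and entries compare (both `<` and `=`) in the same way. -/
def OrderIsoWord (t σ : List ℕ) : Prop :=
  t.length = σ.length ∧
  ∀ r s : ℕ, r < σ.length → s < σ.length →
    ((t.getD r 0 < t.getD s 0 ↔ σ.getD r 0 < σ.getD s 0) ∧
     (t.getD r 0 = t.getD s 0 ↔ σ.getD r 0 = σ.getD s 0))

/-- `w` contains the pattern `σ`: some subsequence of `w`
is order-isomorphic to `σ`. -/
def Contains (w σ : List ℕ) : Prop :=
  ∃ t : List ℕ, t.Sublist w ∧ OrderIsoWord t σ

/-- `w` avoids the pattern `σ`. -/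
def Avoids (w σ : List ℕ) : Prop := ¬ Contains w σ

/-- `w` is a nonnesting permutation of `{1,1,2,2,…,n,n}`:
it avoids the patterns `1221` and `2112`. -/
def IsNonnesting (n : ℕ) (w : List ℕ) : Prop :=
  IsMultisetPerm n w ∧ Avoids w [1,2,2,1] ∧ Avoids w [2,1,1,2]

/-!
In a nonnesting word avoiding `112`, the first occurrences of the values come in the order
`n, n-1, …, 1` (a smaller first occurrence before a larger value creates `112` or `1221`), and so
do the second occurrences (otherwise `112` or `2112` appears). Such a word is therefore determined
by which of its positions are first occurrences; reading those as up steps and the others as down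
steps gives a Dyck word of semilength `n`, and every Dyck word arises this way.
-/

open List DyckStep

theorem orderIsoWord_map {σ : List ℕ} {g : ℕ → ℕ}
    (hg : ∀ x ∈ σ, ∀ y ∈ σ, (g x < g y ↔ x < y) ∧ (g x = g y ↔ x = y)) :
    OrderIsoWord (σ.map g) σ := by
  refine ⟨σ.length_map g, fun r s hr hs => ?_⟩
  simp only [getD_eq_getElem?_getD, getElem?_map, getElem?_eq_getElem hr,
    getElem?_eq_getElem hs, Option.map_some, Option.getD_some]
  exact hg _ (getElem_mem hr) _ (getElem_mem hs)

theorem orderIsoWord_map_ite {σ : List ℕ} (hσ : ∀ x ∈ σ, x = 1 ∨ x = 2) {a b : ℕ} (hab : a < b) :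
    OrderIsoWord (σ.map fun i => if i = 1 then a else b) σ := by
  refine orderIsoWord_map fun x hx y hy => ?_
  rcases hσ x hx with rfl | rfl <;> rcases hσ y hy with rfl | rfl <;>
    simp [hab, hab.ne, hab.ne', not_lt_of_gt hab]

theorem contains_112_iff {w : List ℕ} :
    Contains w [1, 1, 2] ↔ ∃ a b, a < b ∧ [a, a, b] <+ w := by
  constructor
  · rintro ⟨t, ht, hlen, hiso⟩
    obtain ⟨x, y, z, rfl⟩ := length_eq_three.mp hlen
    obtain ⟨-, rfl⟩ : y ≤ x ∧ x = y := by simpa using hiso 0 1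
    obtain ⟨hxz, -⟩ : x < z ∧ x ≠ z := by simpa using hiso 0 2
    exact ⟨x, z, hxz, ht⟩
  · rintro ⟨a, b, hab, hw⟩
    exact ⟨_, by simpa using hw, orderIsoWord_map_ite (by simp) hab⟩

theorem contains_1221_iff {w : List ℕ} :
    Contains w [1, 2, 2, 1] ↔ ∃ a b, a < b ∧ [a, b, b, a] <+ w := by
  constructor
  · rintro ⟨t, ht, hlen, hiso⟩
    obtain ⟨x, y, z, u, rfl⟩ := length_eq_four.mp hlen
    obtain ⟨hxy, -⟩ : x < y ∧ x ≠ y := by simpa using hiso 0 1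
    obtain ⟨-, rfl⟩ : z ≤ y ∧ y = z := by simpa using hiso 1 2
    obtain ⟨-, rfl⟩ : u ≤ x ∧ x = u := by simpa using hiso 0 3
    exact ⟨x, y, hxy, ht⟩
  · rintro ⟨a, b, hab, hw⟩
    exact ⟨_, by simpa using hw, orderIsoWord_map_ite (by simp) hab⟩

theorem contains_2112_iff {w : List ℕ} :
    Contains w [2, 1, 1, 2] ↔ ∃ a b, a < b ∧ [b, a, a, b] <+ w := by
  constructor
  · rintro ⟨t, ht, hlen, hiso⟩
    obtain ⟨x, y, z, u, rfl⟩ := length_eq_four.mp hlen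
    obtain ⟨hyx, -⟩ : y < x ∧ y ≠ x := by simpa using hiso 1 0
    obtain ⟨-, rfl⟩ : z ≤ y ∧ y = z := by simpa using hiso 1 2
    obtain ⟨-, rfl⟩ : u ≤ x ∧ x = u := by simpa using hiso 0 3
    exact ⟨y, x, hyx, ht⟩
  · rintro ⟨a, b, hab, hw⟩
    exact ⟨_, by simpa using hw, orderIsoWord_map_ite (by simp) hab⟩

section Sublist

variable {α : Type*} {x y : α}

theorem List.pair_sublist_or_pair_sublist {v : List α} (hxy : x ≠ y) (hx : x ∈ v) (hy : y ∈ v) :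
    [x, y] <+ v ∨ [y, x] <+ v := by
  induction v with
  | nil => simp at hx
  | cons c v ih =>
    rcases mem_cons.mp hx with rfl | hxv
    · exact .inl ((singleton_sublist.mpr ((mem_cons.mp hy).resolve_left hxy.symm)).cons_cons _)
    rcases mem_cons.mp hy with rfl | hyv
    · exact .inr ((singleton_sublist.mpr hxv).cons_cons _)
    exact (ih hxv hyv).imp (·.cons c) (·.cons c)

theorem List.pair_sublist_or_sublist_of_two_le_count [DecidableEq α] {v : List α} (hxy : x ≠ y)
    (hx : x ∈ v) (hy : 2 ≤ v.count y) : [x, y] <+ v ∨ [y, y, x] <+ v := by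
  induction v with
  | nil => simp at hx
  | cons c v ih =>
    rcases mem_cons.mp hx with rfl | hxv
    · rw [count_cons_of_ne hxy] at hy
      exact .inl ((singleton_sublist.mpr (count_pos_iff.mp (by omega))).cons_cons _)
    by_cases hcy : c = y
    · subst hcy
      rw [count_cons_self] at hy
      exact (pair_sublist_or_pair_sublist hxy hxv (count_pos_iff.mp (by omega))).imp
        (·.cons c) (·.cons_cons c)
    rw [count_cons_of_ne hcy] at hy
    exact (ih hxv hy).imp (·.cons c) (·.cons c)

end Sublist

/-- `f` is the largest value not yet written and `s` the largest value not yet written twice: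
an up step writes `f` for the first time, a down step writes `s` for the second time. -/
def labelSteps : ℕ → ℕ → List DyckStep → List ℕ
  | _, _, [] => []
  | f, s, U :: l => f :: labelSteps (f - 1) s l
  | f, s, D :: l => s :: labelSteps f (s - 1) l

/-- A path from height `s - f` down to `0` that never goes below `0`. -/
structure IsDyckTail (f s : ℕ) (l : List DyckStep) : Prop where
  count_U : l.count U = f
  count_D : l.count D = s
  count_take : ∀ i, (l.take i).count D + f ≤ (l.take i).count U + s

namespace IsDyckTail

variable {f s : ℕ} {l : List DyckStep}

theorem nil_iff : IsDyckTail f s [] ↔ f = 0 ∧ s = 0 := by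
  refine ⟨fun h => ⟨h.count_U.symm, h.count_D.symm⟩, ?_⟩
  rintro ⟨rfl, rfl⟩
  exact ⟨rfl, rfl, by simp⟩

theorem le (h : IsDyckTail f s l) : f ≤ s := by
  simpa using h.count_take 0

theorem cons_U_iff : IsDyckTail f s (U :: l) ↔ 0 < f ∧ f ≤ s ∧ IsDyckTail (f - 1) s l := by
  constructor
  · intro h
    have hU := h.count_U
    rw [count_cons_self] at hU
    refine ⟨by omega, h.le, by omega, by simpa using h.count_D, fun i => ?_⟩
    have := h.count_take (i + 1)
    simp only [take_succ_cons, count_cons_self, count_cons_of_ne (show U ≠ D by simp)] at this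
    omega
  · rintro ⟨hf, hfs, h⟩
    refine ⟨by simp [h.count_U]; omega, by simpa using h.count_D, fun i => ?_⟩
    cases i with
    | zero => simpa using hfs
    | succ i =>
      have := h.count_take i
      simp only [take_succ_cons, count_cons_self, count_cons_of_ne (show U ≠ D by simp)]
      omega

theorem cons_D_iff : IsDyckTail f s (D :: l) ↔ f < s ∧ IsDyckTail f (s - 1) l := by
  constructor
  · intro h
    have hD := h.count_D
    rw [count_cons_self] at hD
    have h1 := h.count_take 1
    simp only [take_succ_cons, take_zero, count_singleton_self,
      count_cons_of_ne (show D ≠ U by simp), count_nil] at h1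
    refine ⟨by omega, by simpa using h.count_U, by omega, fun i => ?_⟩
    have := h.count_take (i + 1)
    simp only [take_succ_cons, count_cons_self, count_cons_of_ne (show D ≠ U by simp)] at this
    omega
  · rintro ⟨hfs, h⟩
    refine ⟨by simpa using h.count_U, by simp [h.count_D]; omega, fun i => ?_⟩
    cases i with
    | zero => simpa using hfs.le
    | succ i =>
      have := h.count_take i
      simp only [take_succ_cons, count_cons_self, count_cons_of_ne (show D ≠ U by simp)]
      omega

end IsDyckTail

/-- What remains of a nonnesting `112`-avoiding word once the values above `s` have been written
twice and those in `(f, s]` once; `not_pending_lt` says these pending values close in decreasing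
order. -/
structure IsNonnestingTail (f s : ℕ) (w : List ℕ) : Prop where
  le : f ≤ s
  count_eq : ∀ i, w.count i = if 1 ≤ i ∧ i ≤ f then 2 else if f < i ∧ i ≤ s then 1 else 0
  not_112 : ∀ a b, a < b → ¬ [a, a, b] <+ w
  not_1221 : ∀ a b, a < b → ¬ [a, b, b, a] <+ w
  not_2112 : ∀ a b, a < b → ¬ [b, a, a, b] <+ w
  not_pending_lt : ∀ x y, f < x → x < y → ¬ [x, y] <+ w

namespace IsNonnestingTail

variable {f s a : ℕ} {w : List ℕ}

theorem nil_iff : IsNonnestingTail f s [] ↔ f = 0 ∧ s = 0 := by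
  constructor
  · intro h
    have hf := h.count_eq f
    have hs := h.count_eq s
    simp only [count_nil] at hf hs
    split_ifs at hf hs
    omega
  · rintro ⟨rfl, rfl⟩
    exact ⟨le_rfl, fun i => by rw [count_nil, if_neg (by omega), if_neg (by omega)],
      by simp, by simp, by simp, by simp⟩

theorem not_mem_of_lt (h : IsNonnestingTail f s w) {b : ℕ} (hb : s < b) : b ∉ w := by
  have hcount := h.count_eq b
  have := h.le
  rw [← count_pos_iff]
  split_ifs at hcount <;> omega

theorem count_le_one_of_lt (h : IsNonnestingTail f s w) {b : ℕ} (hb : f < b) : w.count b ≤ 1 := by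
  have := h.count_eq b
  split_ifs at this <;> omega

theorem cons_first (hf : 0 < f) (hfs : f ≤ s) (h : IsNonnestingTail (f - 1) s w) :
    IsNonnestingTail f s (f :: w) where
  le := hfs
  count_eq i := by
    simp only [count_cons, beq_iff_eq, h.count_eq i]
    split_ifs <;> omega
  not_112 a b hab hsub := by
    rcases cons_sublist_cons'.mp hsub with hw | ⟨rfl, hw⟩
    · exact h.not_112 a b hab hw
    · exact h.not_pending_lt a b (by omega) hab hw
  not_1221 a b hab hsub := by
    rcases cons_sublist_cons'.mp hsub with hw | ⟨rfl, hw⟩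
    · exact h.not_1221 a b hab hw
    · have := h.count_le_one_of_lt (b := b) (by omega)
      have := replicate_sublist_iff.mp
        (show replicate 2 b <+ w from (sublist_append_left [b, b] [a]).trans hw)
      omega
  not_2112 a b hab hsub := by
    rcases cons_sublist_cons'.mp hsub with hw | ⟨rfl, hw⟩
    · exact h.not_2112 a b hab hw
    · exact h.not_112 a b hab hw
  not_pending_lt x y hx hxy hsub := by
    rcases cons_sublist_cons'.mp hsub with hw | ⟨rfl, -⟩
    · exact h.not_pending_lt x y (by omega) hxy hw
    · omega

theorem cons_second (hfs : f < s) (h : IsNonnestingTail f (s - 1) w) :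
    IsNonnestingTail f s (s :: w) where
  le := hfs.le
  count_eq i := by
    simp only [count_cons, beq_iff_eq, h.count_eq i]
    split_ifs <;> omega
  not_112 a b hab hsub := by
    rcases cons_sublist_cons'.mp hsub with hw | ⟨rfl, hw⟩
    · exact h.not_112 a b hab hw
    · exact h.not_mem_of_lt (b := b) (by omega) (hw.subset (by simp))
  not_1221 a b hab hsub := by
    rcases cons_sublist_cons'.mp hsub with hw | ⟨rfl, hw⟩
    · exact h.not_1221 a b hab hw
    · exact h.not_mem_of_lt (b := b) (by omega) (hw.subset (by simp))
  not_2112 a b hab hsub := by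
    rcases cons_sublist_cons'.mp hsub with hw | ⟨rfl, hw⟩
    · exact h.not_2112 a b hab hw
    · exact h.not_mem_of_lt (b := b) (by omega) (hw.subset (by simp))
  not_pending_lt x y hx hxy hsub := by
    rcases cons_sublist_cons'.mp hsub with hw | ⟨rfl, hw⟩
    · exact h.not_pending_lt x y hx hxy hw
    · exact h.not_mem_of_lt (b := y) (by omega) (hw.subset (by simp))

theorem head_eq (h : IsNonnestingTail f s (a :: w)) : (a = f ∧ 0 < f) ∨ (a = s ∧ f < s) := by
  have ha := h.count_eq a
  rw [count_cons_self] at ha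
  split_ifs at ha with hfirst hsecond
  · refine .inl ⟨le_antisymm hfirst.2 (not_lt.mp fun haf => ?_), by omega⟩
    have hfw : 2 ≤ w.count f := by
      have := h.count_eq f
      rw [count_cons_of_ne haf.ne] at this
      rw [this, if_pos (by omega)]
    rcases pair_sublist_or_sublist_of_two_le_count haf.ne (count_pos_iff.mp (by omega)) hfw
      with hw | hw
    · exact h.not_112 a f haf (hw.cons_cons a)
    · exact h.not_1221 a f haf (hw.cons_cons a)
  · refine .inr ⟨le_antisymm hsecond.2 (not_lt.mp fun has => ?_), by omega⟩
    have hsw : s ∈ w := by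
      have := h.count_eq s
      rw [count_cons_of_ne has.ne, if_neg (by omega), if_pos (by omega)] at this
      exact count_pos_iff.mp (by omega)
    exact h.not_pending_lt a s hsecond.1 has ((singleton_sublist.mpr hsw).cons_cons a)

theorem of_cons_first (h : IsNonnestingTail f s (f :: w)) (hf : 0 < f) :
    IsNonnestingTail (f - 1) s w where
  le := (Nat.sub_le f 1).trans h.le
  count_eq i := by
    have := h.le
    have := h.count_eq i
    simp only [count_cons, beq_iff_eq] at this
    split_ifs at this ⊢ <;> omega
  not_112 a b hab hw := h.not_112 a b hab (hw.cons f)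
  not_1221 a b hab hw := h.not_1221 a b hab (hw.cons f)
  not_2112 a b hab hw := h.not_2112 a b hab (hw.cons f)
  not_pending_lt x y hx hxy hw := by
    rcases (show f ≤ x by omega).eq_or_lt with rfl | hfx
    · exact h.not_112 f y hxy (hw.cons_cons f)
    · exact h.not_pending_lt x y hfx hxy (hw.cons f)

theorem of_cons_second (h : IsNonnestingTail f s (s :: w)) (hfs : f < s) :
    IsNonnestingTail f (s - 1) w where
  le := by omega
  count_eq i := by
    have := h.count_eq i
    simp only [count_cons, beq_iff_eq] at this
    split_ifs at this ⊢ <;> omega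
  not_112 a b hab hw := h.not_112 a b hab (hw.cons s)
  not_1221 a b hab hw := h.not_1221 a b hab (hw.cons s)
  not_2112 a b hab hw := h.not_2112 a b hab (hw.cons s)
  not_pending_lt x y hx hxy hw := h.not_pending_lt x y hx hxy (hw.cons s)

theorem cons_iff : IsNonnestingTail f s (a :: w) ↔
    (a = f ∧ 0 < f ∧ f ≤ s ∧ IsNonnestingTail (f - 1) s w) ∨
      (a = s ∧ f < s ∧ IsNonnestingTail f (s - 1) w) := by
  constructor
  · intro h
    rcases h.head_eq with ⟨rfl, hf⟩ | ⟨rfl, hfs⟩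
    · exact .inl ⟨rfl, hf, h.le, h.of_cons_first hf⟩
    · exact .inr ⟨rfl, hfs, h.of_cons_second hfs⟩
  · rintro (⟨rfl, hf, hfs, h⟩ | ⟨rfl, hfs, h⟩)
    · exact cons_first hf hfs h
    · exact cons_second hfs h

end IsNonnestingTail

theorem isNonnestingTail_iff_exists_isDyckTail {f s : ℕ} {w : List ℕ} :
    IsNonnestingTail f s w ↔ ∃ l, IsDyckTail f s l ∧ labelSteps f s l = w := by
  induction w generalizing f s with
  | nil =>
    rw [IsNonnestingTail.nil_iff]
    constructor
    · intro h
      exact ⟨[], IsDyckTail.nil_iff.mpr h, rfl⟩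
    · rintro ⟨_ | ⟨_ | _, l⟩, hl, hw⟩
      · exact IsDyckTail.nil_iff.mp hl
      all_goals cases hw
  | cons a w ih =>
    rw [IsNonnestingTail.cons_iff, ih, ih]
    constructor
    · rintro (⟨rfl, hf, hfs, l, hl, rfl⟩ | ⟨rfl, hfs, l, hl, rfl⟩)
      · exact ⟨U :: l, IsDyckTail.cons_U_iff.mpr ⟨hf, hfs, hl⟩, rfl⟩
      · exact ⟨D :: l, IsDyckTail.cons_D_iff.mpr ⟨hfs, hl⟩, rfl⟩
    · rintro ⟨_ | ⟨_ | _, l⟩, hl, hw⟩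
      · cases hw
      · obtain ⟨hf, hfs, hl⟩ := IsDyckTail.cons_U_iff.mp hl
        obtain ⟨rfl, rfl⟩ := cons.inj hw
        exact .inl ⟨rfl, hf, hfs, l, hl, rfl⟩
      · obtain ⟨hfs, hl⟩ := IsDyckTail.cons_D_iff.mp hl
        obtain ⟨rfl, rfl⟩ := cons.inj hw
        exact .inr ⟨rfl, hfs, l, hl, rfl⟩

theorem labelSteps_inj {f s : ℕ} {l l' : List DyckStep} (hl : IsDyckTail f s l)
    (hl' : IsDyckTail f s l') (h : labelSteps f s l = labelSteps f s l') : l = l' := by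
  induction l generalizing f s l' with
  | nil => cases l' with
    | nil => rfl
    | cons d l' => cases d <;> cases h
  | cons d l ih =>
    cases l' with
    | nil => cases d <;> cases h
    | cons d' l' =>
      cases d <;> cases d' <;> obtain ⟨hhead, htail⟩ := cons.inj h
      · rw [ih (IsDyckTail.cons_U_iff.mp hl).2.2 (IsDyckTail.cons_U_iff.mp hl').2.2 htail]
      · exact absurd hhead (IsDyckTail.cons_D_iff.mp hl').1.ne
      · exact absurd hhead (IsDyckTail.cons_D_iff.mp hl).1.ne'
      · rw [ih (IsDyckTail.cons_D_iff.mp hl).2 (IsDyckTail.cons_D_iff.mp hl').2 htail]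

theorem isNonnestingTail_self_iff {n : ℕ} {w : List ℕ} :
    IsNonnestingTail n n w ↔ IsNonnesting n w ∧ Avoids w [1,1,2] := by
  simp only [IsNonnesting, IsMultisetPerm, Avoids, contains_112_iff, contains_1221_iff,
    contains_2112_iff, not_exists, not_and]
  constructor
  · intro h
    refine ⟨⟨fun i => ?_, h.not_1221, h.not_2112⟩, h.not_112⟩
    rw [h.count_eq]
    split_ifs <;> omega
  · rintro ⟨⟨hcount, h1221, h2112⟩, h112⟩
    refine ⟨le_rfl, fun i => ?_, h112, h1221, h2112, fun x y hx _ hw => ?_⟩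
    · rw [hcount]
      split_ifs <;> omega
    · have hx2 := hcount x
      have := count_pos_iff.mpr (hw.subset (mem_cons_self ..))
      rw [if_neg (by omega)] at hx2
      omega

theorem DyckWord.isDyckTail_toList (p : DyckWord) :
    IsDyckTail p.semilength p.semilength p.toList :=
  ⟨rfl, p.semilength_eq_count_D.symm, fun i => by have := p.count_D_le_count_U i; omega⟩

def IsDyckTail.toDyckWord {n : ℕ} {l : List DyckStep} (h : IsDyckTail n n l) : DyckWord :=
  ⟨l, h.count_U.trans h.count_D.symm, fun i => by have := h.count_take i; omega⟩

theorem nonnesting_avoid_112_general (n : ℕ) :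
    {w : List ℕ | IsNonnesting n w ∧ Avoids w [1,1,2]}.ncard = catalan n := by
  let word (p : {p : DyckWord // p.semilength = n}) : List ℕ := labelSteps n n p.1.toList
  have hdyck (p : {p : DyckWord // p.semilength = n}) : IsDyckTail n n p.1.toList := by
    obtain ⟨p, rfl⟩ := p
    exact p.isDyckTail_toList
  have hinj : Function.Injective word := fun p q h =>
    Subtype.ext (DyckWord.ext (labelSteps_inj (hdyck p) (hdyck q) h))
  have hrange : {w | IsNonnesting n w ∧ Avoids w [1,1,2]} = Set.range word := by
    ext w
    rw [Set.mem_ofPred_eq, ← isNonnestingTail_self_iff, isNonnestingTail_iff_exists_isDyckTail]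
    constructor
    · rintro ⟨l, hl, rfl⟩
      exact ⟨⟨hl.toDyckWord, hl.count_U⟩, rfl⟩
    · rintro ⟨p, rfl⟩
      exact ⟨_, hdyck p, rfl⟩
  rw [hrange, ← Nat.card_coe_set_eq, Nat.card_range_of_injective hinj, Nat.card_eq_fintype_card,
    DyckWord.card_dyckWord_semilength_eq_catalan]

theorem nonnesting_avoid_112 (n : ℕ) (hn : 1 ≤ n) :
    {w : List ℕ | IsNonnesting n w ∧ Avoids w [1,1,2]}.ncard = catalan n :=
  nonnesting_avoid_112_general n
end

section
/- Let c_n denote the number of nonnesting permutations of the multiset {1,1,2,2,…,n,n} that avoid all three patterns 123, 132, and 213. Then c_0 = c_1 = 1, c_2 = 4, and for all n ≥ 3, c_n = 2c_{n−1} + 2c_{n−2} − 2c_{n−3}. -/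
/-!
Avoiding 1221, 2112, 123, 132 and 213 means: no nesting, and a letter lying between a smaller
and a larger letter equals one of them (`Admissible`). Let `s n` count the admissible
permutations of `{1,1,…,n,n}` and `t n` those beginning with `n`.

A word of size `n + 2` begins with `n + 1` or `n + 2`; if it begins with `n + 1`, it begins with
`(n+1)(n+1)(n+2)(n+2)` or `(n+1)(n+2)(n+1)(n+2)`, followed by an arbitrary word of size `n`.
Hence `s (n + 2) = t (n + 2) + 2 s n`. After a leading `n + 1` comes either `n + 1` and an
arbitrary word of size `n`, or `n (n + 1)` and the tail of a word of size `n` beginning with `n`.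
Hence `t (n + 1) = s n + t n`. Eliminating `t`,
`s (n + 3) = s (n + 2) + t (n + 2) + 2 s (n + 1) = 2 s (n + 2) + 2 s (n + 1) - 2 s n`.
-/

open List

structure Admissible (w : List ℕ) : Prop where
  between : ∀ a b c, [a, b, c] <+ w → a < c → b = a ∨ b = c
  nonnesting : ∀ a b, [a, b, b, a] <+ w → a = b

theorem orderIsoWord_three_iff {a b c x y z : ℕ} :
    OrderIsoWord [a, b, c] [x, y, z] ↔
      (a < b ↔ x < y) ∧ (a = b ↔ x = y) ∧ (b < c ↔ y < z) ∧ (b = c ↔ y = z) ∧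
        (a < c ↔ x < z) ∧ (a = c ↔ x = z) := by
  refine ⟨fun ⟨_, h⟩ => ?_, fun h => ⟨rfl, fun r s hr hs => ?_⟩⟩
  · exact ⟨(h 0 1 (by simp) (by simp)).1, (h 0 1 (by simp) (by simp)).2,
      (h 1 2 (by simp) (by simp)).1, (h 1 2 (by simp) (by simp)).2,
      (h 0 2 (by simp) (by simp)).1, (h 0 2 (by simp) (by simp)).2⟩
  · simp only [length_cons, length_nil] at hr hs
    interval_cases r <;> interval_cases s <;> grind [getD]

theorem orderIsoWord_four_iff {a b c d x y z u : ℕ} :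
    OrderIsoWord [a, b, c, d] [x, y, z, u] ↔
      (a < b ↔ x < y) ∧ (a = b ↔ x = y) ∧ (a < c ↔ x < z) ∧ (a = c ↔ x = z) ∧
        (a < d ↔ x < u) ∧ (a = d ↔ x = u) ∧ (b < c ↔ y < z) ∧ (b = c ↔ y = z) ∧
        (b < d ↔ y < u) ∧ (b = d ↔ y = u) ∧ (c < d ↔ z < u) ∧ (c = d ↔ z = u) := by
  refine ⟨fun ⟨_, h⟩ => ?_, fun h => ⟨rfl, fun r s hr hs => ?_⟩⟩
  · exact ⟨(h 0 1 (by simp) (by simp)).1, (h 0 1 (by simp) (by simp)).2,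
      (h 0 2 (by simp) (by simp)).1, (h 0 2 (by simp) (by simp)).2,
      (h 0 3 (by simp) (by simp)).1, (h 0 3 (by simp) (by simp)).2,
      (h 1 2 (by simp) (by simp)).1, (h 1 2 (by simp) (by simp)).2,
      (h 1 3 (by simp) (by simp)).1, (h 1 3 (by simp) (by simp)).2,
      (h 2 3 (by simp) (by simp)).1, (h 2 3 (by simp) (by simp)).2⟩
  · simp only [length_cons, length_nil] at hr hs
    interval_cases r <;> interval_cases s <;> grind [getD]

theorem contains_three_iff {w : List ℕ} {x y z : ℕ} :
    Contains w [x, y, z] ↔ ∃ a b c, [a, b, c] <+ w ∧ OrderIsoWord [a, b, c] [x, y, z] := by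
  refine ⟨fun ⟨t, ht, hiso⟩ => ?_, fun ⟨_, _, _, ht, hiso⟩ => ⟨_, ht, hiso⟩⟩
  obtain ⟨a, b, c, rfl⟩ := length_eq_three.1 hiso.1
  exact ⟨a, b, c, ht, hiso⟩

theorem contains_four_iff {w : List ℕ} {x y z u : ℕ} :
    Contains w [x, y, z, u] ↔
      ∃ a b c d, [a, b, c, d] <+ w ∧ OrderIsoWord [a, b, c, d] [x, y, z, u] := by
  refine ⟨fun ⟨t, ht, hiso⟩ => ?_, fun ⟨_, _, _, _, ht, hiso⟩ => ⟨_, ht, hiso⟩⟩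
  obtain ⟨a, b, c, d, rfl⟩ := length_eq_four.1 hiso.1
  exact ⟨a, b, c, d, ht, hiso⟩

theorem avoids_iff_admissible (w : List ℕ) :
    (Avoids w [1, 2, 2, 1] ∧ Avoids w [2, 1, 1, 2] ∧ Avoids w [1, 2, 3] ∧
      Avoids w [1, 3, 2] ∧ Avoids w [2, 1, 3]) ↔ Admissible w := by
  simp only [Avoids, contains_three_iff, contains_four_iff, orderIsoWord_three_iff,
    orderIsoWord_four_iff, not_exists, not_and, Nat.reduceLT, Nat.reduceEqDiff, iff_true,
    iff_false]
  constructor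
  · rintro ⟨h1221, h2112, h123, h132, h213⟩
    constructor
    · intro a b c h hac
      have := h123 a b c h; have := h132 a b c h; have := h213 a b c h
      omega
    · intro a b h
      have := h1221 a b b a h; have := h2112 a b b a h
      omega
  · intro hw
    refine ⟨fun a b c d h => ?_, fun a b c d h => ?_, fun a b c h => ?_, fun a b c h => ?_,
      fun a b c h => ?_⟩
    any_goals have := hw.between a b c h; omega
    all_goals intros; subst_vars; have := hw.nonnesting _ _ h; omega

namespace Admissible

variable {P u v : List ℕ}

theorem nil : Admissible [] :=
  ⟨fun _ _ _ h => by simp at h, fun _ _ h => by simp at h⟩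

theorem sublist (hv : Admissible v) (h : u <+ v) : Admissible u :=
  ⟨fun a b c hs => hv.between a b c (hs.trans h), fun a b hs => hv.nonnesting a b (hs.trans h)⟩

theorem eq_or_eq_of_mem_of_mem {x a c : ℕ} (hw : Admissible (P ++ x :: v)) (ha : a ∈ P)
    (hc : c ∈ v) (hac : a < c) : x = a ∨ x = c :=
  hw.between a x c ((singleton_sublist.2 ha).append ((singleton_sublist.2 hc).cons_cons x)) hac

theorem eq_of_sublist_of_mem {a b : ℕ} (hw : Admissible (P ++ b :: v)) (hab : [a, b] <+ P)
    (ha : a ∈ v) : a = b :=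
  hw.nonnesting a b (hab.append ((singleton_sublist.2 ha).cons_cons b))

theorem eq_of_lt_of_lt {x y z : ℕ} (hw : Admissible (x :: v)) (hy : y ∈ v) (hz : z ∈ v)
    (hxy : x < y) (hxz : x < z) : y = z := by
  obtain ⟨s, t, rfl⟩ := append_of_mem hy
  rw [mem_append, mem_cons] at hz
  rcases hz with hz | rfl | hz
  · obtain ⟨s₁, s₂, rfl⟩ := append_of_mem hz
    have hw' : Admissible ((x :: s₁) ++ z :: (s₂ ++ y :: t)) := by simpa using hw
    have := hw'.eq_or_eq_of_mem_of_mem mem_cons_self (by simp) hxy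
    omega
  · rfl
  · have := eq_or_eq_of_mem_of_mem (P := x :: s) hw mem_cons_self hz hxz
    omega

-- An occurrence of 1221 or 2112 straddling `P` and `u` must use a letter occurring in both.
theorem append (hP : Admissible P) (hu : Admissible u) (hle : ∀ x ∈ P, ∀ y ∈ u, y ≤ x)
    (hleft : ∀ a b, [a, b, b] <+ P → a ∈ u → a = b)
    (hright : ∀ a b, [b, b, a] <+ u → a ∈ P → a = b) : Admissible (P ++ u) := by
  constructor
  · intro a b c h hac
    obtain ⟨t₁, t₂, heq, h₁, h₂⟩ := sublist_append_iff.1 h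
    rcases t₁ with _ | ⟨p, _ | ⟨q, _ | ⟨r, _ | ⟨s, t₁⟩⟩⟩⟩ <;>
      simp only [nil_append, cons_append, cons.injEq] at heq
    · exact hu.between a b c (heq ▸ h₂) hac
    · obtain ⟨rfl, rfl⟩ := heq
      exact absurd (hle a (h₁.subset mem_cons_self) c (h₂.subset (by simp))) (by omega)
    · obtain ⟨rfl, rfl, rfl⟩ := heq
      exact absurd (hle a (h₁.subset mem_cons_self) c (h₂.subset mem_cons_self)) (by omega)
    · obtain ⟨rfl, rfl, rfl, rfl⟩ := heq
      exact hP.between a b c h₁ hac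
    · simp at heq
  · intro a b h
    obtain ⟨t₁, t₂, heq, h₁, h₂⟩ := sublist_append_iff.1 h
    rcases t₁ with _ | ⟨p, _ | ⟨q, _ | ⟨r, _ | ⟨s, _ | ⟨t, t₁⟩⟩⟩⟩⟩ <;>
      simp only [nil_append, cons_append, cons.injEq] at heq
    · exact hu.nonnesting a b (heq ▸ h₂)
    · obtain ⟨rfl, rfl⟩ := heq
      exact hright a b h₂ (h₁.subset mem_cons_self)
    · obtain ⟨rfl, rfl, rfl⟩ := heq
      have := hle a (h₁.subset mem_cons_self) b (h₂.subset mem_cons_self)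
      have := hle b (h₁.subset (by simp)) a (h₂.subset (by simp))
      omega
    · obtain ⟨rfl, rfl, rfl, rfl⟩ := heq
      exact hleft a b h₁ (h₂.subset mem_cons_self)
    · obtain ⟨rfl, rfl, rfl, rfl, rfl⟩ := heq
      exact hP.nonnesting a b h₁
    · simp at heq

end Admissible

namespace IsMultisetPerm

variable {n : ℕ} {P v : List ℕ}

theorem mem_bounds (h : IsMultisetPerm n v) {x : ℕ} (hx : x ∈ v) : 1 ≤ x ∧ x ≤ n := by
  by_contra hc
  have := h x
  rw [if_neg hc, count_eq_zero] at this
  exact this hx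

theorem mem_of_count_lt (h : IsMultisetPerm n (P ++ v)) {i : ℕ} (h1 : 1 ≤ i) (hn : i ≤ n)
    (hP : P.count i < 2) : i ∈ v := by
  have := h i
  rw [count_append, if_pos ⟨h1, hn⟩] at this
  exact count_pos_iff.1 (by omega)

theorem exists_cons (h : IsMultisetPerm n (P ++ v)) {i : ℕ} (h1 : 1 ≤ i) (hn : i ≤ n)
    (hP : P.count i < 2) : ∃ x v', v = x :: v' :=
  exists_cons_of_ne_nil (ne_nil_of_mem (h.mem_of_count_lt h1 hn hP))

theorem count_lt_two {x : ℕ} (h : IsMultisetPerm n (P ++ x :: v)) : P.count x < 2 := by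
  have := h x
  rw [count_append, count_cons_self] at this
  split_ifs at this
  omega

theorem append_iff {k : ℕ} (hP : ∀ i, P.count i = if k < i ∧ i ≤ n then 2 else 0)
    (hkn : k ≤ n) : IsMultisetPerm n (P ++ v) ↔ IsMultisetPerm k v := by
  refine forall_congr' fun i => ?_
  rw [count_append, hP]
  split_ifs <;> omega

theorem perm_iff {w : List ℕ} (h : v ~ w) : IsMultisetPerm n v ↔ IsMultisetPerm n w := by
  simp only [IsMultisetPerm, h.count_eq]

end IsMultisetPerm

theorem finite_setOf_isMultisetPerm (n : ℕ) : {w | IsMultisetPerm n w}.Finite := by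
  rcases Set.eq_empty_or_nonempty {w | IsMultisetPerm n w} with h | ⟨w₀, hw₀⟩
  · simp [h]
  · refine w₀.permutations.toFinset.finite_toSet.subset fun w hw => ?_
    simpa [mem_permutations, perm_iff_count] using fun i => (hw i).trans (hw₀ i).symm

def admissibleWords (n : ℕ) : Set (List ℕ) := {w | IsMultisetPerm n w ∧ Admissible w}

def admissibleTails (n : ℕ) : Set (List ℕ) := {u | n :: u ∈ admissibleWords n}

theorem setOf_eq_admissibleWords (n : ℕ) :
    {w : List ℕ | IsNonnesting n w ∧
      Avoids w [1, 2, 3] ∧ Avoids w [1, 3, 2] ∧ Avoids w [2, 1, 3]} = admissibleWords n := by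
  ext w
  simp only [Set.mem_ofPred_eq, IsNonnesting, admissibleWords, ← avoids_iff_admissible]
  tauto

theorem admissibleWords_finite (n : ℕ) : (admissibleWords n).Finite :=
  (finite_setOf_isMultisetPerm n).subset fun _ hw => hw.1

theorem admissibleTails_finite (n : ℕ) : (admissibleTails n).Finite :=
  (admissibleWords_finite n).preimage cons_injective.injOn

theorem admissibleWords_zero : admissibleWords 0 = {[]} := by
  ext w
  refine ⟨fun hw => eq_nil_iff_forall_not_mem.2 fun x hx => ?_, ?_⟩
  · have := hw.1.mem_bounds hx
    omega
  · rintro rfl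
    exact ⟨fun i => by rw [if_neg (by omega)]; rfl, Admissible.nil⟩

theorem admissibleTails_zero : admissibleTails 0 = ∅ :=
  Set.eq_empty_of_forall_notMem fun _ hu => by
    have := hu.1.mem_bounds mem_cons_self
    omega

theorem admissibleWords_one : admissibleWords 1 = (1 :: ·) '' admissibleTails 1 := by
  ext w
  refine ⟨fun hw => ?_, fun ⟨v, hv, hw⟩ => hw ▸ hv⟩
  obtain ⟨a, v, rfl⟩ := hw.1.exists_cons (P := []) le_rfl le_rfl (by simp)
  obtain rfl : a = 1 := by
    have := hw.1.mem_bounds mem_cons_self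
    omega
  exact ⟨v, hw, rfl⟩

theorem append_mem_admissibleWords_iff {k n : ℕ} {P u : List ℕ}
    (hP : ∀ i, P.count i = if k < i ∧ i ≤ n then 2 else 0) (hPa : Admissible P) (hkn : k ≤ n) :
    P ++ u ∈ admissibleWords n ↔ u ∈ admissibleWords k := by
  simp only [admissibleWords, Set.mem_ofPred_eq, IsMultisetPerm.append_iff hP hkn]
  refine and_congr_right fun hu => ⟨fun h => h.sublist (sublist_append_right P u), fun h => ?_⟩
  have hlt : ∀ x ∈ P, ∀ y ∈ u, y < x := fun x hx y hy => by
    have := hP x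
    have := count_pos_iff.2 hx
    have := (hu.mem_bounds hy).2
    split_ifs at * <;> omega
  refine hPa.append h (fun x hx y hy => (hlt x hx y hy).le) (fun a b h ha => ?_) fun a b h ha => ?_
  · exact absurd (hlt a (h.subset mem_cons_self) a ha) (lt_irrefl a)
  · exact absurd (hlt a ha a (h.subset (by simp))) (lt_irrefl a)

theorem cons_cons_mem_admissibleWords_iff {k : ℕ} {u : List ℕ} :
    (k + 1) :: (k + 1) :: u ∈ admissibleWords (k + 1) ↔ u ∈ admissibleWords k :=
  append_mem_admissibleWords_iff (P := [k + 1, k + 1])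
    (fun _ => by grind)
    ⟨fun _ _ _ _ _ => by grind, fun _ _ _ => by grind⟩
    (by omega)

theorem pairs_append_mem_admissibleWords_iff {k : ℕ} {u : List ℕ} :
    [k + 1, k + 1, k + 2, k + 2] ++ u ∈ admissibleWords (k + 2) ↔ u ∈ admissibleWords k :=
  append_mem_admissibleWords_iff
    (fun _ => by grind)
    ⟨fun _ _ _ _ _ => by grind, fun _ _ _ => by grind⟩ (by omega)

theorem interleaved_append_mem_admissibleWords_iff {k : ℕ} {u : List ℕ} :
    [k + 1, k + 2, k + 1, k + 2] ++ u ∈ admissibleWords (k + 2) ↔ u ∈ admissibleWords k :=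
  append_mem_admissibleWords_iff
    (fun _ => by grind)
    ⟨fun _ _ _ _ _ => by grind, fun _ _ _ => by grind⟩ (by omega)

theorem zigzag_mem_admissibleWords_iff {k : ℕ} {u : List ℕ} :
    (k + 1) :: k :: (k + 1) :: u ∈ admissibleWords (k + 1) ↔ k :: u ∈ admissibleWords k := by
  have hperm : (k + 1) :: k :: (k + 1) :: u ~ [k + 1, k + 1] ++ k :: u :=
    (Perm.swap _ _ _).cons _
  simp only [admissibleWords, Set.mem_ofPred_eq, IsMultisetPerm.perm_iff hperm,
    IsMultisetPerm.append_iff (P := [k + 1, k + 1]) (k := k) (n := k + 1)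
      (fun _ => by grind) (by omega)]
  refine and_congr_right fun hu => ⟨fun h => h.sublist ?_, fun h => ?_⟩
  · exact (((sublist_cons_self _ u).cons_cons k).cons (k + 1))
  have hle : ∀ y ∈ u, y ≤ k := fun y hy => (hu.mem_bounds (mem_cons_of_mem k hy)).2
  refine Admissible.append (P := [k + 1, k, k + 1])
    ⟨fun _ _ _ _ _ => by grind, fun _ _ _ => by grind⟩
    (h.sublist (sublist_cons_self k u)) (fun x hx y hy => ?_) (fun a b hs ha => ?_)
    fun a b hs ha => ?_
  · grind
  · grind
  · obtain rfl : a = k := by grind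
    exact h.nonnesting a b (hs.cons_cons a)

namespace admissibleWords

variable {n : ℕ} {P v : List ℕ} {x : ℕ}

theorem eq_of_count_eq_two {a c : ℕ} (hw : P ++ x :: v ∈ admissibleWords n)
    (haP : P.count a = 2) (hac : a < c) (hcn : c ≤ n) (hcP : P.count c < 2) : x = c := by
  by_contra hx
  have hc : IsMultisetPerm n ((P ++ [x]) ++ v) := by simpa using hw.1
  have hcv := hc.mem_of_count_lt (by omega) hcn (by simp [hx]; omega)
  rcases hw.2.eq_or_eq_of_mem_of_mem (count_pos_iff.1 (by omega)) hcv hac with rfl | h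
  · exact absurd hw.1.count_lt_two (by omega)
  · exact hx h

theorem eq_of_consecutive {p q : ℕ} (hw : [p, q] ++ x :: v ∈ admissibleWords n)
    (hpq : p = q + 1 ∨ q = p + 1) : x = p := by
  by_contra hxp
  have hp := hw.1.mem_bounds (x := p) (by simp)
  have hq := hw.1.mem_bounds (x := q) (by simp)
  by_cases hxq : x = q
  · subst hxq
    have := hw.2.eq_of_sublist_of_mem (Sublist.refl _)
      (hw.1.mem_of_count_lt (P := [p, x, x]) hp.1 hp.2 (by grind))
    omega
  · have hc : IsMultisetPerm n ([p, q, x] ++ v) := hw.1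
    have hpv := hc.mem_of_count_lt hp.1 hp.2 (by grind)
    have hqv := hc.mem_of_count_lt hq.1 hq.2 (by grind)
    rcases hpq with rfl | rfl
    · have := hw.2.eq_or_eq_of_mem_of_mem (by simp) hpv (Nat.lt_succ_self q)
      omega
    · have := hw.2.eq_or_eq_of_mem_of_mem (by simp) hqv (Nat.lt_succ_self p)
      omega

theorem head_eq_or_eq {k a : ℕ} (hw : a :: v ∈ admissibleWords (k + 1)) :
    a = k ∨ a = k + 1 := by
  have ha := hw.1.mem_bounds mem_cons_self
  by_contra h
  have hc : IsMultisetPerm (k + 1) ([a] ++ v) := hw.1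
  have hk := hc.mem_of_count_lt (i := k) (by omega) (by omega) (count_le_length.trans_lt (by simp))
  have hk1 := hc.mem_of_count_lt (i := k + 1) (by omega) le_rfl
    (count_le_length.trans_lt (by simp))
  have := hw.2.eq_of_lt_of_lt hk hk1 (by omega) (by omega)
  omega

end admissibleWords

open admissibleWords

theorem mem_admissibleWords_add_two {k : ℕ} {w : List ℕ} (hw : w ∈ admissibleWords (k + 2)) :
    (∃ v, w = (k + 2) :: v) ∨ (∃ u, w = [k + 1, k + 1, k + 2, k + 2] ++ u) ∨
      ∃ u, w = [k + 1, k + 2, k + 1, k + 2] ++ u := by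
  obtain ⟨a, w, rfl⟩ := hw.1.exists_cons (P := []) (i := k + 2) (by omega) le_rfl (by simp)
  rcases (head_eq_or_eq hw).symm with rfl | rfl
  · exact Or.inl ⟨w, rfl⟩
  right
  obtain ⟨b, w, rfl⟩ := hw.1.exists_cons (P := [k + 1]) (i := k + 2) (by omega) le_rfl (by simp)
  have hc : IsMultisetPerm (k + 2) ([k + 1, b] ++ w) := hw.1
  have hb := hw.2.eq_or_eq_of_mem_of_mem (P := [k + 1]) mem_cons_self
    (hc.mem_of_count_lt (i := k + 2) (by omega) le_rfl (by grind))
    (Nat.lt_succ_self _)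
  rcases hb with rfl | rfl
  · left
    obtain ⟨x, w, rfl⟩ := hw.1.exists_cons (P := [k + 1, k + 1]) (i := k + 2) (by omega) le_rfl
      (by simp)
    obtain rfl : x = k + 2 := eq_of_count_eq_two (P := [k + 1, k + 1]) hw (by simp)
      (Nat.lt_succ_self _) le_rfl (by simp)
    obtain ⟨y, w, rfl⟩ := hw.1.exists_cons (P := [k + 1, k + 1, k + 2]) (i := k + 2) (by omega)
      le_rfl (by simp)
    obtain rfl : y = k + 2 := eq_of_count_eq_two (P := [k + 1, k + 1, k + 2]) hw (by simp)
      (Nat.lt_succ_self _) le_rfl (by simp)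
    exact ⟨w, rfl⟩
  · right
    obtain ⟨x, w, rfl⟩ := hw.1.exists_cons (P := [k + 1, k + 2]) (i := k + 1) (by omega)
      (by omega) (by simp)
    obtain rfl : x = k + 1 := eq_of_consecutive (p := k + 1) (q := k + 2) hw (Or.inr rfl)
    obtain ⟨y, w, rfl⟩ := hw.1.exists_cons (P := [k + 1, k + 2, k + 1]) (i := k + 2) (by omega)
      le_rfl (by simp)
    obtain rfl : y = k + 2 := eq_of_count_eq_two (P := [k + 1, k + 2, k + 1]) hw (by simp)
      (Nat.lt_succ_self _) le_rfl (by simp)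
    exact ⟨w, rfl⟩

theorem mem_admissibleTails_succ {k : ℕ} {v : List ℕ} (hv : v ∈ admissibleTails (k + 1)) :
    (∃ u, v = (k + 1) :: u) ∨ ∃ u, v = [k, k + 1] ++ u := by
  obtain ⟨b, v, rfl⟩ := hv.1.exists_cons (P := [k + 1]) (i := k + 1) (by omega) le_rfl (by simp)
  by_cases hb : b = k + 1
  · exact Or.inl ⟨v, by rw [hb]⟩
  right
  have hc : IsMultisetPerm (k + 1) ([k + 1, b] ++ v) := hv.1
  have hbk := hv.1.mem_bounds (x := b) (by simp)
  obtain rfl : b = k := by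
    by_contra h
    have hk := hc.mem_of_count_lt (i := k) (by omega) (by omega) (by simp [h])
    have hk1 := hc.mem_of_count_lt (i := k + 1) (by omega) le_rfl (by simp [hb])
    have := (hv.2.sublist (sublist_cons_self _ _)).eq_of_lt_of_lt hk hk1 (by omega) (by omega)
    omega
  obtain ⟨x, v, rfl⟩ := hc.exists_cons (i := b + 1) (by omega) le_rfl (by simp)
  obtain rfl : x = b + 1 := eq_of_consecutive (q := b) hv (Or.inl rfl)
  exact ⟨v, rfl⟩

theorem admissibleWords_add_two (k : ℕ) :
    admissibleWords (k + 2) = ((k + 2) :: ·) '' admissibleTails (k + 2) ∪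
      ([k + 1, k + 1, k + 2, k + 2] ++ ·) '' admissibleWords k ∪
      ([k + 1, k + 2, k + 1, k + 2] ++ ·) '' admissibleWords k := by
  ext w
  constructor
  · intro hw
    rcases mem_admissibleWords_add_two hw with ⟨v, rfl⟩ | ⟨u, rfl⟩ | ⟨u, rfl⟩
    · exact Or.inl (Or.inl ⟨v, hw, rfl⟩)
    · exact Or.inl (Or.inr ⟨u, pairs_append_mem_admissibleWords_iff.1 hw, rfl⟩)
    · exact Or.inr ⟨u, interleaved_append_mem_admissibleWords_iff.1 hw, rfl⟩
  · rintro ((⟨v, hv, rfl⟩ | ⟨u, hu, rfl⟩) | ⟨u, hu, rfl⟩)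
    · exact hv
    · exact pairs_append_mem_admissibleWords_iff.2 hu
    · exact interleaved_append_mem_admissibleWords_iff.2 hu

theorem admissibleTails_succ (k : ℕ) :
    admissibleTails (k + 1) =
      ((k + 1) :: ·) '' admissibleWords k ∪ ([k, k + 1] ++ ·) '' admissibleTails k := by
  ext v
  constructor
  · intro hv
    rcases mem_admissibleTails_succ hv with ⟨u, rfl⟩ | ⟨u, rfl⟩
    · exact Or.inl ⟨u, cons_cons_mem_admissibleWords_iff.1 hv, rfl⟩
    · exact Or.inr ⟨u, zigzag_mem_admissibleWords_iff.1 hv, rfl⟩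
  · rintro (⟨u, hu, rfl⟩ | ⟨u, hu, rfl⟩)
    · exact cons_cons_mem_admissibleWords_iff.2 hu
    · exact zigzag_mem_admissibleWords_iff.2 hu

theorem ncard_admissibleTails_succ (k : ℕ) :
    (admissibleTails (k + 1)).ncard = (admissibleWords k).ncard + (admissibleTails k).ncard := by
  rw [admissibleTails_succ, Set.ncard_union_eq ?_ ((admissibleWords_finite k).image _)
    ((admissibleTails_finite k).image _), Set.ncard_image_of_injective _ cons_injective,
    Set.ncard_image_of_injective _ (append_right_injective _)]
  exact Set.disjoint_image_image fun _ _ _ _ h => by simp at h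

theorem ncard_admissibleWords_add_two (k : ℕ) :
    (admissibleWords (k + 2)).ncard =
      (admissibleTails (k + 2)).ncard + 2 * (admissibleWords k).ncard := by
  have hT := (admissibleTails_finite (k + 2)).image ((k + 2) :: ·)
  have hW := admissibleWords_finite k
  rw [admissibleWords_add_two, Set.ncard_union_eq ?_ (hT.union (hW.image _)) (hW.image _),
    Set.ncard_union_eq ?_ hT (hW.image _), Set.ncard_image_of_injective _ cons_injective,
    Set.ncard_image_of_injective _ (append_right_injective _),
    Set.ncard_image_of_injective _ (append_right_injective _), two_mul, add_assoc]
  · exact Set.disjoint_image_image fun _ _ _ _ h => by simp at h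
  · exact Set.disjoint_union_left.2 ⟨Set.disjoint_image_image fun _ _ _ _ h => by simp at h,
      Set.disjoint_image_image fun _ _ _ _ h => by simp at h⟩

theorem nonnesting_avoid_123_132_213_recurrence
    (c : ℕ → ℕ)
    (hc : ∀ n : ℕ, c n = {w : List ℕ | IsNonnesting n w ∧
      Avoids w [1,2,3] ∧ Avoids w [1,3,2] ∧ Avoids w [2,1,3]}.ncard) :
    c 0 = 1 ∧ c 1 = 1 ∧ c 2 = 4 ∧
      ∀ n : ℕ, 3 ≤ n →
        (c n : ℤ) = 2 * c (n - 1) + 2 * c (n - 2) - 2 * c (n - 3) := by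
  simp only [hc, setOf_eq_admissibleWords]
  have s₀ : (admissibleWords 0).ncard = 1 := by rw [admissibleWords_zero, Set.ncard_singleton]
  have t₀ : (admissibleTails 0).ncard = 0 := by rw [admissibleTails_zero, Set.ncard_empty]
  have s₁ : (admissibleWords 1).ncard = 1 := by
    rw [admissibleWords_one, Set.ncard_image_of_injective _ cons_injective,
      ncard_admissibleTails_succ, s₀, t₀]
  refine ⟨s₀, s₁, ?_, fun n hn => ?_⟩
  · rw [ncard_admissibleWords_add_two, ncard_admissibleTails_succ, ncard_admissibleTails_succ,
      s₀, s₁, t₀]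
  obtain ⟨k, rfl⟩ : ∃ k, n = k + 3 := ⟨n - 3, by omega⟩
  have h₁ : (admissibleWords (k + 3)).ncard =
      (admissibleTails (k + 3)).ncard + 2 * (admissibleWords (k + 1)).ncard :=
    ncard_admissibleWords_add_two (k + 1)
  have h₂ : (admissibleTails (k + 3)).ncard =
      (admissibleWords (k + 2)).ncard + (admissibleTails (k + 2)).ncard :=
    ncard_admissibleTails_succ (k + 2)
  have h₃ := ncard_admissibleWords_add_two k
  rw [show k + 3 - 1 = k + 2 by omega, show k + 3 - 2 = k + 1 by omega, Nat.add_sub_cancel]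
  omega
end
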